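/- (Proposition 4.1.) Let A be a fixed finite MTL-chain, P a predicate language, and M and N A-structures for P. Then every positive-primitive P-sentence that is valid in M is also valid in N if and only if there exists an A-structure L for P that is elementarily equivalent to N and a homomorphism g from M to L. -/

import Mathlib

noncomputable section
open Classical

universe u

/-- A finite MTL-chain: a finite linearly ordered set with least and greatest
elements, a commutative monoid operation `*` with unit `1 = ⊤` that is monotone
in each argument, and the residuum determined by `a * b ≤ c ↔ a ≤ resid b c`. -/
class MTLChain (A : Type u) extends Fintype A, LinearOrder A, CommMonoid A, BoundedOrder A where
  one_eq_top : (1 : A) = ⊤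
  mul_mono : ∀ {a b : A}, a ≤ b → ∀ c : A, c * a ≤ c * b
  resid : A → A → A
  resid_galois : ∀ a b c : A, a * b ≤ c ↔ a ≤ resid b c

noncomputable instance MTLChain.toCompleteLinearOrder (A : Type u) [MTLChain A] :
    CompleteLinearOrder A :=
  Fintype.toCompleteLinearOrder A

/-- A predicate language: predicate symbols and function symbols, each with
a finite arity.  (Nullary predicates are truth constants, nullary functions
are individual constants.)  Crisp equality `≈` is built into formulas. -/
structure Lang : Type (u + 1) where
  Pred : Type u
  predAr : Pred → ℕ
  Func : Type u
  funcAr : Func → ℕ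

variable {A : Type u} [MTLChain A] {L : Lang.{u}}

/-- Terms of a predicate language, with variables indexed by `ℕ`. -/
inductive Term (L : Lang.{u}) : Type u where
  | var : ℕ → Term L
  | func (f : L.Func) (ts : Fin (L.funcAr f) → Term L) : Term L

/-- Formulas: atomic formulas (predicates applied to terms, and crisp equality),
strong conjunction `&`, weak conjunction `∧`, weak disjunction `∨`,
implication `→`, and the quantifiers. -/
inductive Formula (L : Lang.{u}) : Type u where
  | rel (P : L.Pred) (ts : Fin (L.predAr P) → Term L) : Formula L
  | eq (t₁ t₂ : Term L) : Formula L
  | sconj (φ ψ : Formula L) : Formula L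
  | wconj (φ ψ : Formula L) : Formula L
  | wdisj (φ ψ : Formula L) : Formula L
  | impl (φ ψ : Formula L) : Formula L
  | all (x : ℕ) (φ : Formula L) : Formula L
  | ex (x : ℕ) (φ : Formula L) : Formula L

/-- An `A`-structure for the language `L`: a nonempty domain, an `A`-valued
interpretation of each predicate symbol, and an interpretation of each
function symbol. -/
structure Structure (L : Lang.{u}) (A : Type u) [MTLChain A] : Type (u + 1) where
  Dom : Type u
  [dom_nonempty : Nonempty Dom]
  funMap (f : L.Func) : (Fin (L.funcAr f) → Dom) → Dom
  relMap (P : L.Pred) : (Fin (L.predAr P) → Dom) → A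

attribute [instance] Structure.dom_nonempty

/-- Value of a term under an evaluation of the variables. -/
def Term.val (M : Structure L A) (v : ℕ → M.Dom) : Term L → M.Dom
  | .var n => v n
  | .func f ts => M.funMap f fun i => (ts i).val M v

/-- Truth value of a formula in an `A`-structure under an evaluation of the
variables.  Equality is crisp, `&` is interpreted by `*`, `∧` by minimum,
`∨` by maximum, `→` by the residuum, `∀` by infimum (= minimum) and `∃` by
supremum (= maximum) over the domain. -/
def Formula.val (M : Structure L A) : Formula L → (ℕ → M.Dom) → A
  | .rel P ts, v => M.relMap P fun i => (ts i).val M v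
  | .eq t₁ t₂, v => if t₁.val M v = t₂.val M v then 1 else ⊥
  | .sconj φ ψ, v => φ.val M v * ψ.val M v
  | .wconj φ ψ, v => φ.val M v ⊓ ψ.val M v
  | .wdisj φ ψ, v => φ.val M v ⊔ ψ.val M v
  | .impl φ ψ, v => MTLChain.resid (φ.val M v) (ψ.val M v)
  | .all x φ, v => ⨅ a : M.Dom, φ.val M (Function.update v x a)
  | .ex x φ, v => ⨆ a : M.Dom, φ.val M (Function.update v x a)

/-- Free variables of a term. -/
def Term.fvars : Term L → Set ℕ
  | .var n => {n}
  | .func _ ts => ⋃ i, (ts i).fvars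

/-- Free variables of a formula. -/
def Formula.fvars : Formula L → Set ℕ
  | .rel _ ts => ⋃ i, (ts i).fvars
  | .eq t₁ t₂ => t₁.fvars ∪ t₂.fvars
  | .sconj φ ψ => φ.fvars ∪ ψ.fvars
  | .wconj φ ψ => φ.fvars ∪ ψ.fvars
  | .wdisj φ ψ => φ.fvars ∪ ψ.fvars
  | .impl φ ψ => φ.fvars ∪ ψ.fvars
  | .all x φ => φ.fvars \ {x}
  | .ex x φ => φ.fvars \ {x}

/-- A sentence is a formula with no free variables. -/
def Formula.IsSentence (φ : Formula L) : Prop := φ.fvars = ∅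

/-- `φ` is valid in `M` (i.e. `‖φ‖_M = 1`). -/
def Valid (M : Structure L A) (φ : Formula L) : Prop :=
  ∀ v : ℕ → M.Dom, φ.val M v = 1

/-- `M` is an `A`-model of the set of sentences `T`. -/
def Models (M : Structure L A) (T : Set (Formula L)) : Prop :=
  ∀ φ ∈ T, Valid M φ

/-- Two structures are elementarily equivalent if the same sentences are valid
in both (i.e. they have the same theory). -/
def ElemEquiv (M N : Structure L A) : Prop :=
  ∀ φ : Formula L, φ.IsSentence → (Valid M φ ↔ Valid N φ)

/-- `g : M → N` is a homomorphism of `A`-structures: it commutes with the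
interpretation of function symbols, and preserves truth (value `1`) of
atomic predicates. -/
structure IsHom (M N : Structure L A) (g : M.Dom → N.Dom) : Prop where
  map_fun : ∀ (f : L.Func) (d : Fin (L.funcAr f) → M.Dom),
    g (M.funMap f d) = N.funMap f (g ∘ d)
  map_rel : ∀ (P : L.Pred) (d : Fin (L.predAr P) → M.Dom),
    M.relMap P d = 1 → N.relMap P (g ∘ d) = 1

/-- Atomic formulas. -/
inductive IsAtomicFormula : Formula L → Prop
  | rel (P : L.Pred) (ts : Fin (L.predAr P) → Term L) : IsAtomicFormula (.rel P ts)
  | eq (t₁ t₂ : Term L) : IsAtomicFormula (.eq t₁ t₂)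

/-- Quantifier-free formulas built from atomic formulas using only `∧` and `&`. -/
inductive QFConj : Formula L → Prop
  | atom {φ : Formula L} : IsAtomicFormula φ → QFConj φ
  | sconj {φ ψ : Formula L} : QFConj φ → QFConj ψ → QFConj (.sconj φ ψ)
  | wconj {φ ψ : Formula L} : QFConj φ → QFConj ψ → QFConj (.wconj φ ψ)

/-- Quantifier-free formulas built from atomic formulas using only `∧`. -/
inductive QFWConj : Formula L → Prop
  | atom {φ : Formula L} : IsAtomicFormula φ → QFWConj φ
  | wconj {φ ψ : Formula L} : QFWConj φ → QFWConj ψ → QFWConj (.wconj φ ψ)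

/-- Quantifier-free formulas built from atomic formulas using only `&`. -/
inductive QFSConj : Formula L → Prop
  | atom {φ : Formula L} : IsAtomicFormula φ → QFSConj φ
  | sconj {φ ψ : Formula L} : QFSConj φ → QFSConj ψ → QFSConj (.sconj φ ψ)

/-- Quantifier-free formulas built from atomic formulas using only `∧`, `∨` and `&`. -/
inductive QFPos : Formula L → Prop
  | atom {φ : Formula L} : IsAtomicFormula φ → QFPos φ
  | sconj {φ ψ : Formula L} : QFPos φ → QFPos ψ → QFPos (.sconj φ ψ)
  | wconj {φ ψ : Formula L} : QFPos φ → QFPos ψ → QFPos (.wconj φ ψ)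
  | wdisj {φ ψ : Formula L} : QFPos φ → QFPos ψ → QFPos (.wdisj φ ψ)

/-- Positive-primitive (∧&-primitive) formulas: `(∃ x̄) ψ` with `ψ`
quantifier-free built from atomic formulas using only `∧` and `&`. -/
inductive IsPP : Formula L → Prop
  | base {φ : Formula L} : QFConj φ → IsPP φ
  | ex {φ : Formula L} (x : ℕ) : IsPP φ → IsPP (.ex x φ)

/-- ∧-primitive formulas. -/
inductive IsWPrimitive : Formula L → Prop
  | base {φ : Formula L} : QFWConj φ → IsWPrimitive φ
  | ex {φ : Formula L} (x : ℕ) : IsWPrimitive φ → IsWPrimitive (.ex x φ)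

/-- &-primitive formulas. -/
inductive IsSPrimitive : Formula L → Prop
  | base {φ : Formula L} : QFSConj φ → IsSPrimitive φ
  | ex {φ : Formula L} (x : ℕ) : IsSPrimitive φ → IsSPrimitive (.ex x φ)

/-- Existential positive formulas: `(∃ x̄) ψ` with `ψ` quantifier-free built
from atomic formulas using only `∧`, `∨` and `&`. -/
inductive IsExPos : Formula L → Prop
  | base {φ : Formula L} : QFPos φ → IsExPos φ
  | ex {φ : Formula L} (x : ℕ) : IsExPos φ → IsExPos (.ex x φ)

/-- The `A`-direct product of a nonempty family of `A`-structures: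
cartesian product domain, coordinatewise interpretation of function symbols,
and predicates interpreted by the minimum of the coordinatewise values. -/
def dirProd {I : Type u} [Nonempty I] (Ms : I → Structure L A) : Structure L A where
  Dom := ∀ i, (Ms i).Dom
  funMap f d := fun i => (Ms i).funMap f fun k => d k i
  relMap P d := ⨅ i, (Ms i).relMap P fun k => d k i

/-- The data of a weak `A`-direct product of a family of `A`-structures: an
interpretation of the predicate symbols on the cartesian product taking value
`1` exactly when all the coordinatewise values are `1`. -/
structure WeakProdData {I : Type u} (Ms : I → Structure L A) : Type u where
  relMap (P : L.Pred) : (Fin (L.predAr P) → ∀ i, (Ms i).Dom) → A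
  rel_one_iff : ∀ (P : L.Pred) (d : Fin (L.predAr P) → ∀ i, (Ms i).Dom),
    relMap P d = 1 ↔ ∀ i, (Ms i).relMap P (fun k => d k i) = 1

/-- The weak `A`-direct product structure determined by such data. -/
def WeakProdData.toStructure {I : Type u} [Nonempty I] {Ms : I → Structure L A}
    (W : WeakProdData Ms) : Structure L A where
  Dom := ∀ i, (Ms i).Dom
  funMap f d := fun i => (Ms i).funMap f fun k => d k i
  relMap := W.relMap

/-! If every pp-sentence true in `M` is true in `N`, then each finite part of the positive atomic
diagram of `M` (finitely many true atoms `P(m̄)` and equations `f(m̄) = m`) is realised in `N`: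
existentially closing the conjunction of these atoms gives a pp-sentence true in `M`, hence in
`N`, and a witnessing tuple defines a map `M → N` preserving these finitely many facts. Gluing
these maps along an ultrafilter on the finite subsets of the diagram yields a homomorphism from
`M` into an ultrapower of `N`, which is elementarily equivalent to `N` by Łoś's theorem: as `A` is
finite, every `A`-valued function has a `U`-almost-everywhere value. Conversely, homomorphisms
preserve truth of pp-formulas, since `a * b = 1` and `a ⊓ b = 1` force `a = b = 1` and suprema
over a finite chain are attained. -/

theorem exists_apply_eq_iSup_of_finite {α ι : Type*} [CompleteLinearOrder α] [Finite α]
    [Nonempty ι] (f : ι → α) : ∃ i, f i = ⨆ j, f j :=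
  (Set.range_nonempty f).csSup_mem (Set.toFinite _)

theorem exists_apply_eq_iInf_of_finite {α ι : Type*} [CompleteLinearOrder α] [Finite α]
    [Nonempty ι] (f : ι → α) : ∃ i, f i = ⨅ j, f j :=
  (Set.range_nonempty f).csInf_mem (Set.toFinite _)

namespace MTLChain

theorem le_one (a : A) : a ≤ 1 := one_eq_top (A := A) ▸ le_top

theorem eq_one_of_one_le {a : A} (h : 1 ≤ a) : a = 1 := (le_one a).antisymm h

theorem eq_one_of_bot_eq_one (h : (⊥ : A) = 1) (a : A) : a = 1 := eq_one_of_one_le (h ▸ bot_le)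

theorem mul_le_left (a b : A) : a * b ≤ a := by
  simpa using mul_mono (le_one b) a

theorem mul_eq_one_iff {a b : A} : a * b = 1 ↔ a = 1 ∧ b = 1 := by
  refine ⟨fun h => ⟨eq_one_of_one_le ?_, eq_one_of_one_le ?_⟩,
    fun ⟨ha, hb⟩ => by rw [ha, hb, mul_one]⟩
  · exact h ▸ mul_le_left a b
  · exact h ▸ mul_comm b a ▸ mul_le_left b a

theorem inf_eq_one_iff {a b : A} : a ⊓ b = 1 ↔ a = 1 ∧ b = 1 := by
  rw [one_eq_top]
  exact inf_eq_top_iff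

theorem iSup_eq_one_iff {ι : Type*} [Nonempty ι] {f : ι → A} :
    ⨆ i, f i = 1 ↔ ∃ i, f i = 1 := by
  refine ⟨fun h => ?_, fun ⟨i, hi⟩ => eq_one_of_one_le (hi ▸ le_iSup f i)⟩
  obtain ⟨i, hi⟩ := exists_apply_eq_iSup_of_finite f
  exact ⟨i, hi.trans h⟩

end MTLChain

theorem Term.val_congr {M : Structure L A} {v w : ℕ → M.Dom} (t : Term L)
    (h : ∀ n ∈ t.fvars, v n = w n) : t.val M v = t.val M w := by
  induction t with
  | var n => exact h n rfl
  | func f ts ih =>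
    exact congrArg (M.funMap f) <| funext fun k =>
      ih k fun n hn => h n (Set.mem_iUnion.2 ⟨k, hn⟩)

theorem Formula.val_congr {M : Structure L A} (φ : Formula L) {v w : ℕ → M.Dom}
    (h : ∀ n ∈ φ.fvars, v n = w n) : φ.val M v = φ.val M w := by
  induction φ generalizing v w with
  | rel P ts =>
    exact congrArg (M.relMap P) (funext fun k =>
      (ts k).val_congr fun n hn => h n (Set.mem_iUnion.2 ⟨k, hn⟩))
  | eq t₁ t₂ =>
    simp only [Formula.val, t₁.val_congr fun n hn => h n (Or.inl hn),
      t₂.val_congr fun n hn => h n (Or.inr hn)]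
  | sconj φ ψ ihφ ihψ | wconj φ ψ ihφ ihψ | wdisj φ ψ ihφ ihψ | impl φ ψ ihφ ihψ =>
    simp only [Formula.val, ihφ fun n hn => h n (Or.inl hn), ihψ fun n hn => h n (Or.inr hn)]
  | all x φ ih | ex x φ ih =>
    simp only [Formula.val]
    congr 1
    funext a
    refine ih fun n hn => ?_
    rcases eq_or_ne n x with rfl | hne
    · simp
    · simp only [Function.update_of_ne hne]
      exact h n ⟨hn, hne⟩

theorem Formula.IsSentence.val_eq {M : Structure L A} {φ : Formula L} (hφ : φ.IsSentence)
    (v w : ℕ → M.Dom) : φ.val M v = φ.val M w :=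
  φ.val_congr fun n hn => absurd (hφ ▸ hn) (Set.notMem_empty n)

namespace Formula

theorem val_wconj_eq_one_iff {M : Structure L A} {φ ψ : Formula L} {v : ℕ → M.Dom} :
    (wconj φ ψ).val M v = 1 ↔ φ.val M v = 1 ∧ ψ.val M v = 1 :=
  MTLChain.inf_eq_one_iff

theorem val_ex_eq_one_iff {M : Structure L A} {x : ℕ} {φ : Formula L} {v : ℕ → M.Dom} :
    (ex x φ).val M v = 1 ↔ ∃ a, φ.val M (Function.update v x a) = 1 :=
  MTLChain.iSup_eq_one_iff

/-- The empty conjunction is `x₀ ≈ x₀`, as the language may have no closed terms. -/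
def wconjList : List (Formula L) → Formula L
  | [] => eq (.var 0) (.var 0)
  | φ :: l => wconj φ (wconjList l)

theorem qfConj_wconjList {l : List (Formula L)} (h : ∀ φ ∈ l, QFConj φ) :
    QFConj (wconjList l) := by
  induction l with
  | nil => exact .atom (.eq _ _)
  | cons φ l ih => exact .wconj (h φ List.mem_cons_self) (ih fun ψ hψ => h ψ (.tail _ hψ))

theorem fvars_wconjList_subset {S : Set ℕ} (h₀ : 0 ∈ S) {l : List (Formula L)}
    (h : ∀ φ ∈ l, φ.fvars ⊆ S) : (wconjList l).fvars ⊆ S := by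
  induction l with
  | nil => simpa [wconjList, fvars, Term.fvars] using h₀
  | cons φ l ih =>
    exact Set.union_subset (h φ List.mem_cons_self) (ih fun ψ hψ => h ψ (.tail _ hψ))

theorem val_wconjList_eq_one_iff {M : Structure L A} {v : ℕ → M.Dom} {l : List (Formula L)} :
    (wconjList l).val M v = 1 ↔ ∀ φ ∈ l, φ.val M v = 1 := by
  induction l with
  | nil => simp [wconjList, Formula.val]
  | cons φ l ih => simp [wconjList, val_wconj_eq_one_iff, ih]

def exs (φ : Formula L) : ℕ → Formula L
  | 0 => φ
  | n + 1 => ex n (φ.exs n)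

theorem _root_.IsPP.exs {φ : Formula L} (hφ : IsPP φ) (n : ℕ) : IsPP (φ.exs n) := by
  induction n with
  | zero => exact hφ
  | succ n ih => exact .ex n ih

theorem fvars_exs (φ : Formula L) (n : ℕ) : (φ.exs n).fvars = φ.fvars \ Set.Iio n := by
  induction n with
  | zero => simp [exs]
  | succ n ih =>
    ext k
    simp only [exs, fvars, ih, Set.mem_sdiff, Set.mem_Iio, Set.mem_singleton_iff,
      Nat.lt_add_one_iff_lt_or_eq]
    tauto

theorem isSentence_exs {φ : Formula L} {n : ℕ} (h : φ.fvars ⊆ Set.Iio n) :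
    (φ.exs n).IsSentence := by
  rw [IsSentence, fvars_exs, Set.sdiff_eq_empty]
  exact h

theorem val_exs_eq_one_iff {M : Structure L A} (φ : Formula L) (n : ℕ) {v : ℕ → M.Dom} :
    (φ.exs n).val M v = 1 ↔
      ∃ w : ℕ → M.Dom, (∀ k, n ≤ k → w k = v k) ∧ φ.val M w = 1 := by
  induction n generalizing v with
  | zero =>
    refine ⟨fun h => ⟨v, fun _ _ => rfl, h⟩, fun ⟨w, hw, h⟩ => ?_⟩
    rwa [funext fun k => hw k k.zero_le] at h
  | succ n ih =>
    simp only [exs, val_ex_eq_one_iff, ih]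
    constructor
    · rintro ⟨a, w, hw, h⟩
      exact ⟨w, fun k hk => by rw [hw k (by omega), Function.update_of_ne (by omega)], h⟩
    · rintro ⟨w, hw, h⟩
      refine ⟨w n, w, fun k hk => ?_, h⟩
      rcases hk.eq_or_lt with rfl | hk
      · simp
      · rw [Function.update_of_ne hk.ne', hw k hk]

end Formula

namespace Ultrafilter

variable {I α : Type*} [Finite α] (U : Ultrafilter I)

theorem exists_eventually_eq (f : I → α) : ∃ a, ∀ᶠ i in U, f i = a := by
  obtain ⟨a, ha⟩ := (U.map f).eq_pure_of_finite
  exact ⟨a, show {a} ∈ U.map f from ha ▸ rfl⟩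

def limit (f : I → α) : α := (U.exists_eventually_eq f).choose

theorem eventually_eq_limit (f : I → α) : ∀ᶠ i in U, f i = U.limit f :=
  (U.exists_eventually_eq f).choose_spec

theorem limit_eq_iff {f : I → α} {a : α} : U.limit f = a ↔ ∀ᶠ i in U, f i = a := by
  refine ⟨fun h => h ▸ U.eventually_eq_limit f, fun h => ?_⟩
  obtain ⟨i, hi, hi'⟩ := (h.and (U.eventually_eq_limit f)).exists
  exact hi' ▸ hi

theorem limit_congr {f g : I → α} (h : ∀ᶠ i in U, f i = g i) : U.limit f = U.limit g :=
  (U.limit_eq_iff).2 <| (h.and (U.eventually_eq_limit g)).mono fun _ ⟨hf, hg⟩ => hf.trans hg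

theorem limit_const (a : α) : U.limit (fun _ => a) = a :=
  (U.limit_eq_iff).2 (.of_forall fun _ => rfl)

theorem limit_map₂ (op : α → α → α) (f g : I → α) :
    U.limit (fun i => op (f i) (g i)) = op (U.limit f) (U.limit g) :=
  (U.limit_eq_iff).2 <| (U.eventually_eq_limit f).and (U.eventually_eq_limit g) |>.mono
    fun _ ⟨hf, hg⟩ => by rw [hf, hg]

theorem limit_ite (p : I → Prop) (a b : α) :
    U.limit (fun i => if p i then a else b) = if ∀ᶠ i in U, p i then a else b := by
  split_ifs with hp
  · exact (U.limit_eq_iff).2 (hp.mono fun i hi => if_pos hi)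
  · exact (U.limit_eq_iff).2 ((U.eventually_not.2 hp).mono fun i hi => if_neg hi)

theorem limit_mono [Preorder α] {f g : I → α} (h : ∀ i, f i ≤ g i) :
    U.limit f ≤ U.limit g := by
  obtain ⟨i, hf, hg⟩ := ((U.eventually_eq_limit f).and (U.eventually_eq_limit g)).exists
  exact hf ▸ hg ▸ h i

theorem limit_iSup [CompleteLinearOrder α] {β : Type*} [Nonempty β] (F : I → β → α) :
    U.limit (fun i => ⨆ b, F i b) = ⨆ w : I → β, U.limit fun i => F i (w i) := by
  refine le_antisymm ?_ (iSup_le fun w => U.limit_mono fun i => le_iSup (F i) (w i))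
  choose w hw using fun i => exists_apply_eq_iSup_of_finite (F i)
  simp_rw [← hw]
  exact le_iSup (fun w : I → β => U.limit fun i => F i (w i)) w

theorem limit_iInf [CompleteLinearOrder α] {β : Type*} [Nonempty β] (F : I → β → α) :
    U.limit (fun i => ⨅ b, F i b) = ⨅ w : I → β, U.limit fun i => F i (w i) := by
  refine le_antisymm (le_iInf fun w => U.limit_mono fun i => iInf_le (F i) (w i)) ?_
  choose w hw using fun i => exists_apply_eq_iInf_of_finite (F i)
  simp_rw [← hw]
  exact iInf_le (fun w : I → β => U.limit fun i => F i (w i)) w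

end Ultrafilter

theorem Function.update_eval {ι α β : Type*} [DecidableEq ι] (v : ι → α → β) (x : ι)
    (w : α → β) (a : α) :
    (fun n => Function.update v x w n a) = Function.update (fun n => v n a) x (w a) :=
  funext fun n => Function.apply_update (fun _ f => f a) v x w n

namespace Structure

open Filter

variable {I : Type u} (U : Ultrafilter I) (N : Structure L A)

abbrev ultrapower : Structure L A where
  Dom := (U : Filter I).Germ N.Dom
  dom_nonempty := ⟨Germ.ofFun fun _ => Classical.arbitrary N.Dom⟩
  funMap f q := Germ.ofFun fun i => N.funMap f fun k => (q k).out i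
  relMap P q := U.limit fun i => N.relMap P fun k => (q k).out i

variable {U N}

theorem ultrapower_ofFun_surjective :
    Function.Surjective (Germ.ofFun : (I → N.Dom) → (N.ultrapower U).Dom) :=
  Quot.mk_surjective

theorem eventually_out_ofFun_eq {n : ℕ} (x : Fin n → I → N.Dom) :
    ∀ᶠ i in U, ∀ k, Quotient.out (Germ.ofFun (x k) : (U : Filter I).Germ N.Dom) i = x k i :=
  eventually_all.2 fun _ => Germ.coe_eq.1 (Quotient.out_eq _)

theorem ultrapower_funMap_ofFun (f : L.Func) (x : Fin (L.funcAr f) → I → N.Dom) :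
    (N.ultrapower U).funMap f (fun k => Germ.ofFun (x k)) =
      Germ.ofFun fun i => N.funMap f fun k => x k i :=
  Germ.coe_eq.2 <| (eventually_out_ofFun_eq x).mono fun _ hi =>
    congrArg (N.funMap f) (funext hi)

theorem ultrapower_relMap_ofFun (P : L.Pred) (x : Fin (L.predAr P) → I → N.Dom) :
    (N.ultrapower U).relMap P (fun k => Germ.ofFun (x k)) =
      U.limit fun i => N.relMap P fun k => x k i :=
  U.limit_congr <| (eventually_out_ofFun_eq x).mono fun _ hi =>
    congrArg (N.relMap P) (funext hi)

theorem ultrapower_val_term (v : ℕ → I → N.Dom) (t : Term L) :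
    t.val (N.ultrapower U) (fun n => Germ.ofFun (v n)) =
      Germ.ofFun fun i => t.val N fun n => v n i := by
  induction t with
  | var n => rfl
  | func f ts ih =>
    simp only [Term.val, ih]
    exact ultrapower_funMap_ofFun f _

theorem ultrapower_update_ofFun (v : ℕ → I → N.Dom) (x : ℕ) (w : I → N.Dom) :
    Function.update (fun n => (Germ.ofFun (v n) : (N.ultrapower U).Dom)) x (Germ.ofFun w) =
      fun n => Germ.ofFun (Function.update v x w n) :=
  funext fun n => (Function.apply_update (fun _ => Germ.ofFun) v x w n).symm

/-- Łoś's theorem. -/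
theorem ultrapower_val (φ : Formula L) (v : ℕ → I → N.Dom) :
    φ.val (N.ultrapower U) (fun n => Germ.ofFun (v n)) =
      U.limit fun i => φ.val N fun n => v n i := by
  induction φ generalizing v with
  | rel P ts =>
    simp only [Formula.val, ultrapower_val_term]
    exact ultrapower_relMap_ofFun P _
  | eq t₁ t₂ =>
    simp only [Formula.val, ultrapower_val_term, Germ.coe_eq, U.limit_ite]
    rfl
  | sconj φ ψ ihφ ihψ | wconj φ ψ ihφ ihψ | wdisj φ ψ ihφ ihψ | impl φ ψ ihφ ihψ =>
    simp only [Formula.val, ihφ, ihψ]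
    exact (U.limit_map₂ _ _ _).symm
  | all x φ ih =>
    simp only [Formula.val, U.limit_iInf, ← ultrapower_ofFun_surjective.iInf_comp,
      ultrapower_update_ofFun, ih, Function.update_eval]
  | ex x φ ih =>
    simp only [Formula.val, U.limit_iSup, ← ultrapower_ofFun_surjective.iSup_comp,
      ultrapower_update_ofFun, ih, Function.update_eval]

theorem valid_ultrapower_iff {φ : Formula L} : Valid (N.ultrapower U) φ ↔ Valid N φ := by
  refine ⟨fun h v => ?_, fun h q => ?_⟩
  · simpa only [ultrapower_val, U.limit_const] using h fun n => Germ.ofFun fun _ => v n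
  · obtain ⟨v, rfl⟩ := ultrapower_ofFun_surjective.comp_left q
    exact (ultrapower_val φ v).trans (by simp only [h _, U.limit_const])

theorem ultrapower_elemEquiv : ElemEquiv (N.ultrapower U) N :=
  fun _ _ => valid_ultrapower_iff

end Structure

namespace IsHom

variable {M K : Structure L A} {g : M.Dom → K.Dom}

theorem val_term (hg : IsHom M K g) (v : ℕ → M.Dom) (t : Term L) :
    g (t.val M v) = t.val K (g ∘ v) := by
  induction t with
  | var n => rfl
  | func f ts ih =>
    simp only [Term.val, hg.map_fun]
    exact congrArg (K.funMap f) (funext ih)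

theorem val_eq_one_of_qfConj (hg : IsHom M K g) {φ : Formula L} (hφ : QFConj φ)
    {v : ℕ → M.Dom} (h : φ.val M v = 1) : φ.val K (g ∘ v) = 1 := by
  induction hφ with
  | atom hat =>
    cases hat with
    | rel P ts =>
      simp only [Formula.val, ← hg.val_term] at h ⊢
      exact hg.map_rel P _ h
    | eq t₁ t₂ =>
      simp only [Formula.val] at h ⊢
      split_ifs at h with heq
      · rw [← hg.val_term, ← hg.val_term, heq, if_pos rfl]
      · exact MTLChain.eq_one_of_bot_eq_one h _
  | sconj _ _ ih₁ ih₂ =>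
    obtain ⟨h₁, h₂⟩ := MTLChain.mul_eq_one_iff.1 h
    exact MTLChain.mul_eq_one_iff.2 ⟨ih₁ h₁, ih₂ h₂⟩
  | wconj _ _ ih₁ ih₂ =>
    obtain ⟨h₁, h₂⟩ := Formula.val_wconj_eq_one_iff.1 h
    exact Formula.val_wconj_eq_one_iff.2 ⟨ih₁ h₁, ih₂ h₂⟩

theorem val_eq_one_of_isPP (hg : IsHom M K g) {φ : Formula L} (hφ : IsPP φ)
    {v : ℕ → M.Dom} (h : φ.val M v = 1) : φ.val K (g ∘ v) = 1 := by
  induction hφ generalizing v with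
  | base hφ => exact hg.val_eq_one_of_qfConj hφ h
  | ex x _ ih =>
    obtain ⟨a, ha⟩ := Formula.val_ex_eq_one_iff.1 h
    refine Formula.val_ex_eq_one_iff.2 ⟨g a, ?_⟩
    rw [← Function.comp_update]
    exact ih ha

theorem id (M : Structure L A) : IsHom M M id := ⟨fun _ _ => rfl, fun _ _ => _root_.id⟩

theorem valid_of_isPP (hg : IsHom M K g) {φ : Formula L} (hφ : IsPP φ) (hs : φ.IsSentence)
    (h : Valid M φ) : Valid K φ := fun v => by
  obtain ⟨m⟩ := M.dom_nonempty
  rw [hs.val_eq v (g ∘ fun _ => m)]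
  exact hg.val_eq_one_of_isPP hφ (h _)

end IsHom

theorem elemEquiv_of_bot_eq_one (hA : (⊥ : A) = 1) (M N : Structure L A) : ElemEquiv M N :=
  fun _ _ => iff_of_true (fun _ => MTLChain.eq_one_of_bot_eq_one hA _)
    (fun _ => MTLChain.eq_one_of_bot_eq_one hA _)

/-- The positive atomic diagram of `M`: its true atoms `P(m̄)` and equations `f(m̄) = m`. -/
inductive DiagramFact (M : Structure L A) : Type u
  | rel (P : L.Pred) (d : Fin (L.predAr P) → M.Dom) (h : M.relMap P d = 1)
  | func (f : L.Func) (d : Fin (L.funcAr f) → M.Dom)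

namespace DiagramFact

variable {M N K : Structure L A}

def PreservedBy (g : M.Dom → K.Dom) : DiagramFact M → Prop
  | rel P d _ => K.relMap P (g ∘ d) = 1
  | func f d => g (M.funMap f d) = K.funMap f (g ∘ d)

theorem _root_.IsHom.of_forall_preservedBy {g : M.Dom → K.Dom}
    (h : ∀ x : DiagramFact M, x.PreservedBy g) : IsHom M K g :=
  ⟨fun f d => h (func f d), fun P d hd => h (rel P d hd)⟩

def elems : DiagramFact M → List M.Dom
  | rel _ d _ => List.ofFn d
  | func f d => M.funMap f d :: List.ofFn d

theorem preservedBy_of_eqOn (x : DiagramFact M) {g : M.Dom → M.Dom}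
    (hg : ∀ m ∈ x.elems, g m = m) : x.PreservedBy g := by
  cases x with
  | rel P d hd =>
    have : g ∘ d = d := funext fun k => hg _ (List.mem_ofFn.2 ⟨k, rfl⟩)
    simpa [PreservedBy, this] using hd
  | func f d =>
    have : g ∘ d = d := funext fun k =>
      hg _ (List.mem_cons_of_mem _ (List.mem_ofFn.2 ⟨k, rfl⟩))
    simp only [PreservedBy, this]
    exact hg _ List.mem_cons_self

def formula (idx : M.Dom → ℕ) : DiagramFact M → Formula L
  | rel P d _ => .rel P fun k => .var (idx (d k))
  | func f d => .eq (.var (idx (M.funMap f d))) (.func f fun k => .var (idx (d k)))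

theorem isAtomicFormula_formula (idx : M.Dom → ℕ) (x : DiagramFact M) :
    IsAtomicFormula (x.formula idx) := by
  cases x <;> constructor

theorem fvars_formula_subset (idx : M.Dom → ℕ) (x : DiagramFact M) :
    (x.formula idx).fvars ⊆ Set.range idx := by
  cases x <;> simp [formula, Formula.fvars, Term.fvars, Set.subset_def]

theorem val_formula_eq_one_iff (hA : (⊥ : A) ≠ 1) (idx : M.Dom → ℕ) (x : DiagramFact M)
    (u : ℕ → K.Dom) : (x.formula idx).val K u = 1 ↔ x.PreservedBy (u ∘ idx) := by
  cases x with
  | rel P d _ => rfl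
  | func f d =>
    simp only [formula, Formula.val, Term.val, PreservedBy, Function.comp_def]
    by_cases h : u (idx (M.funMap f d)) = K.funMap f fun k => u (idx (d k))
    · simp only [h, if_true]
    · simp only [h, if_false, hA]

theorem exists_forall_preservedBy (hA : (⊥ : A) ≠ 1)
    (hpp : ∀ φ : Formula L, IsPP φ → φ.IsSentence → Valid M φ → Valid N φ)
    (s : Finset (DiagramFact M)) : ∃ g : M.Dom → N.Dom, ∀ x ∈ s, x.PreservedBy g := by
  let l := s.toList.flatMap elems
  let idx : M.Dom → ℕ := (l.idxOf ·)
  let ψ := Formula.wconjList (s.toList.map (formula idx))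
  have hψ {K : Structure L A} (u : ℕ → K.Dom) :
      ψ.val K u = 1 ↔ ∀ x ∈ s, x.PreservedBy (u ∘ idx) := by
    simp [ψ, Formula.val_wconjList_eq_one_iff, val_formula_eq_one_iff hA]
  -- all variables `l.idxOf m ≤ l.length` get bound
  let φ := ψ.exs (l.length + 1)
  have hφ : IsPP φ := IsPP.exs (.base <| Formula.qfConj_wconjList fun _ hχ => by
    obtain ⟨x, -, rfl⟩ := List.mem_map.1 hχ
    exact .atom (x.isAtomicFormula_formula idx)) _
  have hsent : φ.IsSentence := Formula.isSentence_exs <|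
    Formula.fvars_wconjList_subset (Nat.succ_pos _) fun _ hχ => by
      obtain ⟨x, -, rfl⟩ := List.mem_map.1 hχ
      exact (x.fvars_formula_subset idx).trans <| Set.range_subset_iff.2 fun _ =>
        Nat.lt_succ_of_le List.idxOf_le_length
  have hM : Valid M φ := fun v => (ψ.val_exs_eq_one_iff _).2
    ⟨fun k => l.getD k (v k), fun k hk => List.getD_eq_default _ _ (by omega),
      (hψ _).2 fun x hx => x.preservedBy_of_eqOn fun m hm => by
        have hml : m ∈ l := List.mem_flatMap.2 ⟨x, Finset.mem_toList.2 hx, hm⟩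
        simp only [Function.comp_apply, idx]
        rw [List.getD_eq_getElem _ _ (List.idxOf_lt_length_iff.2 hml), List.getElem_idxOf]⟩
  obtain ⟨w, -, hw⟩ := (ψ.val_exs_eq_one_iff _).1 (hpp φ hφ hsent hM fun _ =>
    Classical.arbitrary N.Dom)
  exact ⟨w ∘ idx, (hψ w).1 hw⟩

theorem preservedBy_ultrapower {I : Type u} {U : Ultrafilter I} (x : DiagramFact M)
    {G : I → M.Dom → N.Dom} (h : ∀ᶠ i in U, x.PreservedBy (G i)) :
    x.PreservedBy (K := N.ultrapower U) fun m => Filter.Germ.ofFun fun i => G i m := by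
  cases x with
  | rel P d _ =>
    exact (Structure.ultrapower_relMap_ofFun P _).trans ((U.limit_eq_iff).2 h)
  | func f d =>
    exact (Filter.Germ.coe_eq.2 h).trans (Structure.ultrapower_funMap_ofFun f _).symm

end DiagramFact

/-- **Proposition 4.1.**  Every positive-primitive sentence valid in `M` is
also valid in `N` iff there is a structure `K` elementarily equivalent to `N`
and a homomorphism `g` from `M` to `K`. -/
theorem pp_preservation_iff_hom_into_elemEquiv {A : Type u} [MTLChain A]
    {L : Lang.{u}} (M N : Structure L A) :
    (∀ φ : Formula L, IsPP φ → φ.IsSentence → Valid M φ → Valid N φ) ↔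
      ∃ (K : Structure L A) (g : M.Dom → K.Dom), ElemEquiv K N ∧ IsHom M K g := by
  constructor
  · intro hpp
    by_cases hA : (⊥ : A) = 1
    · exact ⟨M, id, elemEquiv_of_bot_eq_one hA M N, IsHom.id M⟩
    choose G hG using DiagramFact.exists_forall_preservedBy hA hpp
    let U := Ultrafilter.of (Filter.atTop : Filter (Finset (DiagramFact M)))
    refine ⟨N.ultrapower U, fun m => Filter.Germ.ofFun fun s => G s m,
      Structure.ultrapower_elemEquiv, IsHom.of_forall_preservedBy fun x => ?_⟩
    refine x.preservedBy_ultrapower (Ultrafilter.of_le _ ?_)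
    exact (Filter.eventually_ge_atTop {x}).mono fun s hs =>
      hG s x (Finset.singleton_subset_iff.1 hs)
  · rintro ⟨K, g, hKN, hg⟩ φ hφ hs hM
    exact (hKN φ hs).1 (hg.valid_of_isPP hφ hs hM)
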